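/- Let R be a commutative ring, p a prime number, and n ∈ ℕ. If x ∈ 𝕎 R is a Witt vector all of whose coefficients lie in 𝔞_n(R), then pⁿ·x = 0 in 𝕎 R. In particular every such Witt vector is annihilated by a power of p. -/

import Mathlib

/-!
Multiplication by `p` on Witt vectors is `F ∘ V`, and the `k`-th coefficient of `F y` is
`y_k ^ p + p * r` where `r` is a polynomial without constant term in the coefficients of `y`.
The sets `𝔞_n(R)` are ideals (by Kummer's bound on the `p`-adic valuation of `(p^i).choose j`),
and both `a ↦ a ^ p` and `a ↦ p * a` map `𝔞_{n+1}(R)` into `𝔞_n(R)`. Hence multiplication by `p`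
takes Witt vectors with coefficients in `𝔞_{n+1}(R)` to those with coefficients in `𝔞_n(R)`, and
`𝔞_0(R) = 0`.
-/

/-- The subset `𝔞_n(R) = {x ∈ R : p^{n−i}·x^{p^i} = 0 for all 0 ≤ i ≤ n}`. -/
def wittAnnSet (R : Type*) [CommRing R] (p n : ℕ) : Set R :=
  {x | ∀ i ≤ n, (p : R) ^ (n - i) * x ^ p ^ i = 0}

open MvPolynomial

section wittAnnSet

variable {R : Type*} [CommRing R] {p n : ℕ}

theorem wittAnnSet_zero : wittAnnSet R p 0 = {0} := by
  ext a
  simp [wittAnnSet]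

theorem pow_mem_wittAnnSet {a : R} (ha : a ∈ wittAnnSet R p (n + 1)) :
    a ^ p ∈ wittAnnSet R p n := by
  intro i hi
  simpa [← pow_mul, ← pow_succ'] using ha (i + 1) (by omega)

theorem natCast_mul_mem_wittAnnSet (hp : p ≠ 0) {a : R} (ha : a ∈ wittAnnSet R p (n + 1)) :
    (p : R) * a ∈ wittAnnSet R p n := by
  intro i hi
  obtain ⟨m, hm⟩ := Nat.exists_eq_add_one_of_ne_zero (pow_ne_zero i hp)
  have ha' := ha i (by omega)
  rw [hm, Nat.sub_add_comm hi] at ha'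
  calc (p : R) ^ (n - i) * ((p : R) * a) ^ p ^ i
      = (p : R) ^ m * ((p : R) ^ (n - i + 1) * a ^ (m + 1)) := by rw [hm]; ring
    _ = 0 := by rw [ha', mul_zero]

theorem natCast_pow_mul_choose_mul_pow_eq_zero [hp : Fact p.Prime] {a : R}
    (ha : a ∈ wittAnnSet R p n) {i j : ℕ} (hi : i ≤ n) (hj0 : j ≠ 0) (hj : j ≤ p ^ i) :
    (p : R) ^ (n - i) * ((p ^ i).choose j : R) * a ^ j = 0 := by
  set t := multiplicity p j
  have hpt : p ^ t ≤ j := Nat.le_of_dvd (Nat.pos_of_ne_zero hj0) (pow_multiplicity_dvd p j)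
  have hti : t ≤ i := (Nat.pow_le_pow_iff_right hp.out.one_lt).1 (hpt.trans hj)
  have hchoose : p ^ (i - t) ∣ (p ^ i).choose j :=
    pow_dvd_of_le_emultiplicity (hp.out.emultiplicity_choose_prime_pow hj hj0).ge
  have hdvd :
      (p : R) ^ (n - t) * a ^ p ^ t ∣ (p : R) ^ (n - i) * ((p ^ i).choose j : R) * a ^ j := by
    rw [← Nat.sub_add_sub_cancel hi hti, pow_add]
    exact mul_dvd_mul (mul_dvd_mul_left _ (by simpa using Nat.cast_dvd_cast (α := R) hchoose))
      (pow_dvd_pow a hpt)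
  rwa [ha t (hti.trans hi), zero_dvd_iff] at hdvd

theorem add_mem_wittAnnSet [Fact p.Prime] {a b : R} (ha : a ∈ wittAnnSet R p n)
    (hb : b ∈ wittAnnSet R p n) : a + b ∈ wittAnnSet R p n := by
  intro i hi
  rw [add_pow, Finset.mul_sum]
  refine Finset.sum_eq_zero fun j hj => ?_
  rcases eq_or_ne j 0 with rfl | hj0
  · simpa using hb i hi
  · have hj' := Nat.lt_succ_iff.mp (Finset.mem_range.mp hj)
    calc _ = (p : R) ^ (n - i) * ((p ^ i).choose j : R) * a ^ j * b ^ (p ^ i - j) := by ring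
      _ = 0 := by rw [natCast_pow_mul_choose_mul_pow_eq_zero ha hi hj0 hj', zero_mul]

variable (R p n) in
def wittAnnIdeal [hp : Fact p.Prime] : Ideal R where
  carrier := wittAnnSet R p n
  zero_mem' i _ := by simp [zero_pow (pow_ne_zero i hp.out.ne_zero)]
  add_mem' := add_mem_wittAnnSet
  smul_mem' r a ha i hi := by
    rw [smul_eq_mul, mul_pow, mul_left_comm, ha i hi, mul_zero]

end wittAnnSet

theorem MvPolynomial.aeval_mem_of_constantCoeff_eq_zero {σ R S : Type*} [CommSemiring R]
    [CommRing S] [Algebra R S] {I : Ideal S} {f : σ → S} (hf : ∀ i, f i ∈ I)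
    {q : MvPolynomial σ R} (hq : constantCoeff q = 0) : aeval f q ∈ I := by
  rw [← Ideal.Quotient.eq_zero_iff_mem, ← Ideal.Quotient.mkₐ_eq_mk R, comp_aeval_apply]
  simp [Ideal.Quotient.eq_zero_iff_mem.mpr (hf _), aeval_zero', hq]

namespace WittVector

variable {p : ℕ} [hp : Fact p.Prime] {R : Type*} [CommRing R]

variable (p) in
theorem constantCoeff_frobeniusPolyAux (k : ℕ) :
    MvPolynomial.constantCoeff (frobeniusPolyAux p k) = 0 := by
  have h := coeff_frobenius (0 : WittVector p ℤ) k
  have hzero : (0 : WittVector p ℤ).coeff = 0 := funext (zero_coeff p ℤ)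
  rw [map_zero, zero_coeff, hzero, aeval_zero, frobeniusPoly] at h
  simpa [hp.out.ne_zero] using h

theorem exists_mem_coeff_frobenius_eq {I : Ideal R} {x : WittVector p R}
    (hx : ∀ k, x.coeff k ∈ I) (k : ℕ) : ∃ r ∈ I, (frobenius x).coeff k = x.coeff k ^ p + p * r :=
  ⟨_, aeval_mem_of_constantCoeff_eq_zero hx (constantCoeff_frobeniusPolyAux p k),
    by simp [coeff_frobenius, frobeniusPoly]⟩

theorem coeff_frobenius_mem_wittAnnSet {n : ℕ} {x : WittVector p R}
    (hx : ∀ k, x.coeff k ∈ wittAnnSet R p (n + 1)) (k : ℕ) :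
    (frobenius x).coeff k ∈ wittAnnSet R p n := by
  obtain ⟨r, hr, hxk⟩ := exists_mem_coeff_frobenius_eq (I := wittAnnIdeal R p (n + 1)) hx k
  rw [hxk]
  exact add_mem_wittAnnSet (pow_mem_wittAnnSet (hx k))
    (natCast_mul_mem_wittAnnSet hp.out.ne_zero hr)

theorem coeff_mul_p_mem_wittAnnSet {n : ℕ} {x : WittVector p R}
    (hx : ∀ k, x.coeff k ∈ wittAnnSet R p (n + 1)) (k : ℕ) :
    (x * p).coeff k ∈ wittAnnSet R p n := by
  rw [← frobenius_verschiebung]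
  refine coeff_frobenius_mem_wittAnnSet (fun k => ?_) k
  cases k with
  | zero => rw [verschiebung_coeff_zero]; exact zero_mem (wittAnnIdeal R p (n + 1))
  | succ k => rw [verschiebung_coeff_succ]; exact hx k

end WittVector

/-- A `p`-typical Witt vector all of whose coefficients lie in `𝔞_n(R)` is annihilated
by `pⁿ`. -/
theorem stmt10 (p : ℕ) [Fact p.Prime] (R : Type*) [CommRing R] (n : ℕ)
    (x : WittVector p R) (hx : ∀ k, x.coeff k ∈ wittAnnSet R p n) :
    (p : WittVector p R) ^ n * x = 0 := by
  induction n generalizing x with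
  | zero =>
    have hx0 : x = 0 := by
      ext k
      simpa [wittAnnSet_zero] using hx k
    rw [hx0, mul_zero]
  | succ n ih =>
    rw [pow_succ, mul_assoc, mul_comm _ x]
    exact ih _ (WittVector.coeff_mul_p_mem_wittAnnSet hx)
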